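/- For a finely layered medium of n isotropic layers satisfying the strict stability conditions, the Backus-average equivalent medium is isotropic—i.e., c1212 = c2323, c1111 = c3333 and c1133 = c1111 − 2·c1212—if and only if the rigidity μ is constant across the layers (μᵢ = μⱼ for all i, j). -/

import Mathlib

/-!
Isotropy contains `c1212 = c2323`, i.e. `⟨μ⟩⟨1/μ⟩ = 1`, the equality case of the AM–HM
inequality; since `∑ᵢ∑ⱼ (μᵢ - μⱼ)²/(μᵢμⱼ) = 2(∑μ · ∑1/μ - n²)`, it holds only for constant `μ`.
Conversely, for constant `μ = m` the identity `λ/(λ+2m) = 1 - 2m/(λ+2m)` makes every average in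
`c1111` and `c1133` affine in `A = ⟨1/(λ+2m)⟩`, and then `c1111 = A⁻¹ = c3333` and
`c1133 = A⁻¹ - 2m`.
-/

open Filter Real

noncomputable section

/-- Arithmetic average of `n` values (equal layer thickness). -/
def avgN (n : ℕ) (f : Fin n → ℝ) : ℝ := (∑ i, f i) / n

/-- Backus-average coefficient c1111 of `n` isotropic layers. -/
def c1111N (n : ℕ) (lam mu : Fin n → ℝ) : ℝ :=
  (avgN n (fun i => lam i / (lam i + 2 * mu i))) ^ 2
      * (avgN n (fun i => 1 / (lam i + 2 * mu i)))⁻¹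
    + avgN n (fun i => 4 * (lam i + mu i) * mu i / (lam i + 2 * mu i))

/-- Backus-average coefficient c1122 of `n` isotropic layers. -/
def c1122N (n : ℕ) (lam mu : Fin n → ℝ) : ℝ :=
  (avgN n (fun i => lam i / (lam i + 2 * mu i))) ^ 2
      * (avgN n (fun i => 1 / (lam i + 2 * mu i)))⁻¹
    + avgN n (fun i => 2 * lam i * mu i / (lam i + 2 * mu i))

/-- Backus-average coefficient c1133 of `n` isotropic layers. -/
def c1133N (n : ℕ) (lam mu : Fin n → ℝ) : ℝ :=
  avgN n (fun i => lam i / (lam i + 2 * mu i))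
    * (avgN n (fun i => 1 / (lam i + 2 * mu i)))⁻¹

/-- Backus-average coefficient c3333 of `n` isotropic layers. -/
def c3333N (n : ℕ) (lam mu : Fin n → ℝ) : ℝ :=
  (avgN n (fun i => 1 / (lam i + 2 * mu i)))⁻¹

/-- Backus-average coefficient c2323 of `n` isotropic layers. -/
def c2323N (n : ℕ) (mu : Fin n → ℝ) : ℝ := (avgN n (fun i => 1 / mu i))⁻¹

/-- Backus-average coefficient c1212 of `n` isotropic layers. -/
def c1212N (n : ℕ) (mu : Fin n → ℝ) : ℝ := avgN n mu

end

section Average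

variable {n : ℕ}

lemma avgN_const (hn : n ≠ 0) (c : ℝ) : avgN n (fun _ => c) = c := by
  have : (n : ℝ) ≠ 0 := Nat.cast_ne_zero.mpr hn
  simp only [avgN, Finset.sum_const, Finset.card_univ, Fintype.card_fin, nsmul_eq_mul]
  field_simp

lemma avgN_sub (f g : Fin n → ℝ) : avgN n (fun i => f i - g i) = avgN n f - avgN n g := by
  simp only [avgN, Finset.sum_sub_distrib, sub_div]

lemma avgN_const_mul (c : ℝ) (f : Fin n → ℝ) : avgN n (fun i => c * f i) = c * avgN n f := by
  simp only [avgN, ← Finset.mul_sum, mul_div_assoc]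

lemma avgN_pos (hn : n ≠ 0) {f : Fin n → ℝ} (hf : ∀ i, 0 < f i) : 0 < avgN n f :=
  have : Nonempty (Fin n) := Fin.pos_iff_nonempty.mp (Nat.pos_of_ne_zero hn)
  div_pos (Finset.sum_pos (fun i _ => hf i) Finset.univ_nonempty) (by positivity)

end Average

section MeanEquality

variable {ι : Type*} [Fintype ι]

lemma sum_sum_sq_sub_div_mul {x : ι → ℝ} (hx : ∀ i, x i ≠ 0) :
    ∑ i, ∑ j, (x i - x j) ^ 2 / (x i * x j)
      = 2 * ((∑ i, x i) * (∑ i, 1 / x i) - Fintype.card ι ^ 2) := by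
  have expand : ∀ i j, (x i - x j) ^ 2 / (x i * x j) = x i * (1 / x j) + x j * (1 / x i) - 2 := by
    intro i j
    field_simp [hx i, hx j]
    ring
  simp only [expand, Finset.sum_sub_distrib, Finset.sum_add_distrib, Finset.sum_const,
    Finset.card_univ, nsmul_eq_mul]
  rw [Finset.sum_comm (f := fun i j => x j * (1 / x i)), ← Finset.sum_mul_sum]
  ring

lemma eq_of_sum_mul_sum_inv_eq_card_sq {x : ι → ℝ} (hx : ∀ i, 0 < x i)
    (h : (∑ i, x i) * (∑ i, 1 / x i) = Fintype.card ι ^ 2) (i j : ι) : x i = x j := by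
  have hzero : ∑ i, ∑ j, (x i - x j) ^ 2 / (x i * x j) = 0 := by
    rw [sum_sum_sq_sub_div_mul fun i => (hx i).ne', h, sub_self, mul_zero]
  have hterm_nonneg : ∀ i j, 0 ≤ (x i - x j) ^ 2 / (x i * x j) :=
    fun i j => div_nonneg (sq_nonneg _) (mul_pos (hx i) (hx j)).le
  have hrow := (Finset.sum_eq_zero_iff_of_nonneg fun i _ =>
    Finset.sum_nonneg fun j _ => hterm_nonneg i j).mp hzero i (Finset.mem_univ i)
  have hij := (Finset.sum_eq_zero_iff_of_nonneg fun j _ => hterm_nonneg i j).mp hrow j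
    (Finset.mem_univ j)
  rw [div_eq_zero_iff, or_iff_left (mul_pos (hx i) (hx j)).ne', sq_eq_zero_iff, sub_eq_zero] at hij
  exact hij

end MeanEquality

section Backus

variable {n : ℕ}

lemma c1212N_eq_c2323N_iff (hn : n ≠ 0) {mu : Fin n → ℝ} (hmu : ∀ i, 0 < mu i) :
    c1212N n mu = c2323N n mu ↔ ∀ i j, mu i = mu j := by
  have hnR : (n : ℝ) ≠ 0 := Nat.cast_ne_zero.mpr hn
  have hinv : avgN n (fun i => 1 / mu i) ≠ 0 := (avgN_pos hn fun i => one_div_pos.mpr (hmu i)).ne'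
  constructor
  · intro h
    refine eq_of_sum_mul_sum_inv_eq_card_sq hmu ?_
    rw [c1212N, c2323N, ← mul_eq_one_iff_eq_inv₀ hinv, avgN, avgN, div_mul_div_comm,
      div_eq_one_iff_eq (mul_ne_zero hnR hnR)] at h
    rw [h, Fintype.card_fin, sq]
  · intro hconst
    obtain ⟨m, rfl⟩ : ∃ m, mu = fun _ => m :=
      ⟨mu ⟨0, Nat.pos_of_ne_zero hn⟩, funext fun i => hconst _ _⟩
    rw [c1212N, c2323N, avgN_const hn, avgN_const hn, one_div, inv_inv]

variable (lam : Fin n → ℝ) {m : ℝ}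

lemma avgN_div_lam_add_two_mul (hn : n ≠ 0) (hlm : ∀ i, lam i + 2 * m ≠ 0) :
    avgN n (fun i => lam i / (lam i + 2 * m))
      = 1 - 2 * m * avgN n (fun i => 1 / (lam i + 2 * m)) := by
  have : (fun i => lam i / (lam i + 2 * m)) = fun i => 1 - 2 * m * (1 / (lam i + 2 * m)) := by
    funext i
    field_simp [hlm i]
    ring
  rw [this, avgN_sub, avgN_const hn, avgN_const_mul]

lemma avgN_four_mul_lam_add_div (hn : n ≠ 0) (hlm : ∀ i, lam i + 2 * m ≠ 0) :
    avgN n (fun i => 4 * (lam i + m) * m / (lam i + 2 * m))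
      = 4 * m - 4 * m ^ 2 * avgN n (fun i => 1 / (lam i + 2 * m)) := by
  have : (fun i => 4 * (lam i + m) * m / (lam i + 2 * m))
      = fun i => 4 * m - 4 * m ^ 2 * (1 / (lam i + 2 * m)) := by
    funext i
    rw [eq_sub_iff_add_eq, mul_one_div, ← add_div, div_eq_iff (hlm i)]
    ring
  rw [this, avgN_sub, avgN_const hn, avgN_const_mul]

lemma c1111N_const_mu (hn : n ≠ 0) (hlm : ∀ i, 0 < lam i + 2 * m) :
    c1111N n lam (fun _ => m) = c3333N n lam (fun _ => m) := by
  have hA := (avgN_pos hn fun i => one_div_pos.mpr (hlm i)).ne'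
  rw [c1111N, c3333N, avgN_div_lam_add_two_mul lam hn fun i => (hlm i).ne',
    avgN_four_mul_lam_add_div lam hn fun i => (hlm i).ne']
  field_simp
  ring

lemma c1133N_const_mu (hn : n ≠ 0) (hlm : ∀ i, 0 < lam i + 2 * m) :
    c1133N n lam (fun _ => m) = c3333N n lam (fun _ => m) - 2 * m := by
  have hA := (avgN_pos hn fun i => one_div_pos.mpr (hlm i)).ne'
  rw [c1133N, c3333N, avgN_div_lam_add_two_mul lam hn fun i => (hlm i).ne']
  field_simp

end Backus

/-- For n isotropic layers satisfying the strict stability conditions,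
the Backus-average medium is isotropic (c1212 = c2323, c1111 = c3333 and
c1133 = c1111 − 2·c1212) iff the rigidity μ is constant across the layers. -/
theorem stmt9 (n : ℕ) (hn : 1 ≤ n) (lam mu : Fin n → ℝ)
    (hmu : ∀ i, 0 < mu i) (hlm : ∀ i, 0 < lam i + 2 * mu i) :
    (c1212N n mu = c2323N n mu ∧
      c1111N n lam mu = c3333N n lam mu ∧
      c1133N n lam mu = c1111N n lam mu - 2 * c1212N n mu)
    ↔ (∀ i j, mu i = mu j) := by
  have hn0 : n ≠ 0 := Nat.one_le_iff_ne_zero.mp hn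
  rw [← c1212N_eq_c2323N_iff hn0 hmu]
  refine ⟨And.left, fun hiso => ⟨hiso, ?_⟩⟩
  obtain ⟨m, rfl⟩ : ∃ m, mu = fun _ => m :=
    ⟨mu ⟨0, hn⟩, funext fun i => (c1212N_eq_c2323N_iff hn0 hmu).mp hiso _ _⟩
  rw [c1111N_const_mu lam hn0 hlm, c1133N_const_mu lam hn0 hlm, c1212N, avgN_const hn0]
  exact ⟨rfl, rfl⟩
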